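/- Let q ≥ 3 and let ∇ ∈ ℝ^{p×n} be the discrete gradient operator of the 2-dimensional regular grid graph on V = {0,…,q−1}², with n = q² and p = 2q(q−1). Let ℓ be an integer with 4 < ℓ ≤ p and let m ∈ ℕ satisfy m ≥ n − (1/2)(ℓ + √(2ℓ + 1) − 1). Then κ_∇(ℓ) ≤ m; that is, the number of measurements m meets the necessary and sufficient condition of the known-cosupport uniqueness criterion, so that under the assumptions of that criterion every ℓ-cosparse vector with known cosupport is uniquely recoverable from m measurements. -/

import Mathlib

/-- Base-`q` encoding of a grid point, used to orient the edges of the grid graph. -/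
def enc (q d : ℕ) (v : Fin d → Fin q) : ℕ := ∑ i : Fin d, q ^ (i : ℕ) * (v i : ℕ)

/-- The (oriented) edges of the regular grid graph on `{0,…,q−1}^d`: pairs of vertices at
ℓ1-distance 1, canonically oriented. They index the rows of the discrete gradient. -/
abbrev OEdge (q d : ℕ) : Type :=
  {e : (Fin d → Fin q) × (Fin d → Fin q) //
    (∑ i, |(e.1 i : ℤ) - (e.2 i : ℤ)|) = 1 ∧ enc q d e.1 < enc q d e.2}

/-- The discrete gradient operator of the regular grid graph: one row per edge
`e = (v₁, v₂)`, with entry `−1` in the column of `v₁`, `+1` in the column of `v₂`. -/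
def grad (q d : ℕ) : Matrix (OEdge q d) (Fin d → Fin q) ℝ :=
  Matrix.of fun e v => if v = e.1.2 then 1 else if v = e.1.1 then -1 else 0

/-- `W_Λ`: the nullspace of the rows of the discrete gradient indexed by `Λ`. -/
noncomputable def Wgrad (q d : ℕ) (Λ : Finset (OEdge q d)) :
    Submodule ℝ ((Fin d → Fin q) → ℝ) :=
  ⨅ e ∈ Λ, LinearMap.ker
    ((LinearMap.proj e : (OEdge q d → ℝ) →ₗ[ℝ] ℝ) ∘ₗ (grad q d).mulVecLin)

/-- `κ_∇(ℓ) = max{dim W_Λ : Λ ⊆ E, |Λ| ≥ ℓ}` for the discrete gradient of the grid. -/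
noncomputable def kappaGrad (q d ℓ : ℕ) : ℕ :=
  (Finset.univ.filter (fun Λ : Finset (OEdge q d) => ℓ ≤ Λ.card)).sup
    (fun Λ => Module.finrank ℝ (Wgrad q d Λ))

/-!
`W_Λ` is the kernel of the Laplacian of the graph `(V, Λ)`, so its dimension is the number `K`
of connected components. Inside the planar grid, a vertex set `S` meeting `r` rows and `c` columns
spans at most `2|S| - r - c` edges: sending each edge to its lower endpoint is injective and
misses the last vertex of every line. Since `rc ≥ |S|`, a component with `s` vertices has at most
`2s - 2√s` edges. Summing over components of sizes `s_i` and writing `y_i = √s_i - 1`, the bound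
`∑ y_i² ≤ (∑ y_i)²` turns `ℓ ≤ 2 ∑ (s_i - √s_i)` into `ℓ + √(2ℓ + 1) - 1 ≤ 2(n - K)`.
-/

open Finset

theorem Finset.card_add_card_image_le_of_forall_exists_lt {α β γ : Type*} [DecidableEq β]
    [LinearOrder γ] {S T : Finset α} (f : α → β) (g : α → γ) (hTS : T ⊆ S)
    (hT : ∀ t ∈ T, ∃ s ∈ S, f s = f t ∧ g t < g s) :
    #T + #(S.image f) ≤ #S := by
  have hfiber : ∀ y ∈ S.image f, #(T.filter (f · = y)) < #(S.filter (f · = y)) := by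
    intro y hy
    obtain ⟨s₀, hs₀, rfl⟩ := mem_image.mp hy
    obtain ⟨top, htop, htop_max⟩ :=
      (S.filter (f · = f s₀)).exists_max_image g ⟨s₀, mem_filter.mpr ⟨hs₀, rfl⟩⟩
    refine card_lt_card ((ssubset_iff_of_subset (filter_subset_filter _ hTS)).mpr
      ⟨top, htop, fun htopT => ?_⟩)
    obtain ⟨s, hs, hfs, hlt⟩ := hT top (mem_filter.mp htopT).1
    exact (htop_max s (mem_filter.mpr ⟨hs, hfs.trans (mem_filter.mp htop).2⟩)).not_gt hlt
  calc #T + #(S.image f) = ∑ y ∈ S.image f, (#(T.filter (f · = y)) + 1) := by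
        rw [sum_add_distrib, ← card_eq_sum_card_fiberwise fun t ht => mem_image_of_mem f (hTS ht)]
        simp
    _ ≤ ∑ y ∈ S.image f, #(S.filter (f · = y)) := sum_le_sum hfiber
    _ = #S := (card_eq_sum_card_image f S).symm

theorem card_le_sum_sub_of_le_sum_sub_sqrt {ι : Type*} (t : Finset ι) (s : ι → ℝ)
    (hs : ∀ i ∈ t, 1 ≤ s i) {ℓ : ℝ} (hℓ : ℓ ≤ ∑ i ∈ t, 2 * (s i - √(s i))) :
    (#t : ℝ) ≤ ∑ i ∈ t, s i - 1 / 2 * (ℓ + √(2 * ℓ + 1) - 1) := by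
  set y : ι → ℝ := fun i => √(s i) - 1
  have hy : ∀ i ∈ t, 0 ≤ y i := fun i hi => by
    simpa [y] using Real.one_le_sqrt.mpr (hs i hi)
  have hsy : ∀ i ∈ t, s i = y i ^ 2 + 2 * y i + 1 := fun i hi => by
    simp only [y]; nlinarith [Real.sq_sqrt (zero_le_one.trans (hs i hi))]
  set Y := ∑ i ∈ t, y i
  have hsum_s : ∑ i ∈ t, s i = ∑ i ∈ t, y i ^ 2 + 2 * Y + #t := by
    rw [sum_congr rfl hsy, sum_add_distrib, sum_add_distrib, ← mul_sum]; simp [Y]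
  have hℓ' : ℓ ≤ 2 * ∑ i ∈ t, y i ^ 2 + 2 * Y :=
    calc ℓ ≤ _ := hℓ
      _ = ∑ i ∈ t, (2 * y i ^ 2 + 2 * y i) := sum_congr rfl fun i hi => by
          rw [show √(s i) = y i + 1 by simp [y], hsy i hi]; ring
      _ = _ := by rw [sum_add_distrib, ← mul_sum, ← mul_sum]
  have hsq := sum_sq_le_sq_sum_of_nonneg hy
  have hY : 0 ≤ Y := sum_nonneg hy
  have hroot : √(2 * ℓ + 1) ≤ 2 * Y + 1 :=
    Real.sqrt_le_iff.mpr ⟨by linarith, by nlinarith⟩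
  rw [hsum_s]
  linarith

theorem OEdge.exists_dir {q d : ℕ} (e : OEdge q d) :
    ∃ i, (e.1.2 i : ℕ) = e.1.1 i + 1 ∧ ∀ j ≠ i, e.1.2 j = e.1.1 j := by
  obtain ⟨⟨u, w⟩, hsum, henc⟩ := e
  dsimp only at hsum henc ⊢
  obtain ⟨i, hi⟩ : ∃ i, u i ≠ w i := by
    by_contra! h
    simp [h] at hsum
  have hi0 : 1 ≤ |(u i : ℤ) - w i| := Int.one_le_abs (sub_ne_zero.mpr (by omega))
  rw [← add_sum_erase _ _ (mem_univ i)] at hsum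
  have hrest_nonneg := sum_nonneg fun j (_ : j ∈ univ.erase i) => abs_nonneg ((u j : ℤ) - w j)
  have hrest : ∀ j ≠ i, u j = w j := by
    have := (sum_eq_zero_iff_of_nonneg (fun j _ => abs_nonneg ((u j : ℤ) - w j))).mp
      (by linarith)
    intro j hj
    exact Fin.ext (by simpa [sub_eq_zero] using this j (mem_erase.mpr ⟨hj, mem_univ j⟩))
  have hi1 : |(u i : ℤ) - w i| = 1 := by linarith
  have henc' : (enc q d w : ℤ) - enc q d u = q ^ (i : ℕ) * ((w i : ℤ) - u i) := by
    simp only [enc, Nat.cast_sum, Nat.cast_mul, Nat.cast_pow, ← sum_sub_distrib, ← mul_sub]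
    refine sum_eq_single i (fun j _ hj => by rw [hrest j hj, sub_self, mul_zero]) (by simp)
  have hpos : 0 < (w i : ℤ) - u i :=
    pos_of_mul_pos_right (henc' ▸ sub_pos.mpr (by exact_mod_cast henc))
      (pow_nonneg (Nat.cast_nonneg q) _)
  refine ⟨i, ?_, fun j hj => (hrest j hj).symm⟩
  rw [abs_sub_comm, abs_of_pos hpos] at hi1
  omega

namespace OEdge

variable {q d : ℕ}

theorem fst_ne_snd (e : OEdge q d) : e.1.1 ≠ e.1.2 :=
  fun h => e.2.2.ne (congrArg (enc q d) h)

noncomputable def dir (e : OEdge q d) : Fin d := e.exists_dir.choose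

theorem snd_dir (e : OEdge q d) : (e.1.2 e.dir : ℕ) = e.1.1 e.dir + 1 :=
  e.exists_dir.choose_spec.1

theorem snd_of_ne_dir (e : OEdge q d) {j : Fin d} (hj : j ≠ e.dir) : e.1.2 j = e.1.1 j :=
  e.exists_dir.choose_spec.2 j hj

theorem eq_of_fst_eq_of_dir_eq {e e' : OEdge q d} (h₁ : e.1.1 = e'.1.1) (hdir : e.dir = e'.dir) :
    e = e' := by
  refine Subtype.ext (Prod.ext h₁ (funext fun j => ?_))
  by_cases hj : j = e.dir
  · subst hj
    exact Fin.ext (by rw [snd_dir, h₁, hdir, snd_dir])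
  · rw [snd_of_ne_dir e hj, snd_of_ne_dir e' (hdir ▸ hj), h₁]

end OEdge

open OEdge in
theorem card_filter_dir_add_card_image_le {q d : ℕ} {S : Finset (Fin d → Fin q)}
    {E : Finset (OEdge q d)} (hE : ∀ e ∈ E, e.1.1 ∈ S ∧ e.1.2 ∈ S) {i k : Fin d}
    (hki : k ≠ i) :
    #(E.filter (·.dir = i)) + #(S.image (· k)) ≤ #S := by
  classical
  rw [← card_image_of_injOn fun e he e' he' h =>
    eq_of_fst_eq_of_dir_eq h ((mem_filter.mp he).2.trans (mem_filter.mp he').2.symm)]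
  refine card_add_card_image_le_of_forall_exists_lt (fun v : Fin d → Fin q => v k)
    (fun v => v i) ?_ ?_
  · exact image_subset_iff.mpr fun e he => (hE e (mem_filter.mp he).1).1
  · simp only [mem_image, mem_filter]
    rintro _ ⟨e, ⟨he, rfl⟩, rfl⟩
    exact ⟨e.1.2, (hE e he).2, snd_of_ne_dir e hki, Fin.lt_def.mpr (by rw [snd_dir]; omega)⟩

theorem card_edges_add_card_image_add_card_image_le {q : ℕ} {S : Finset (Fin 2 → Fin q)}
    {E : Finset (OEdge q 2)} (hE : ∀ e ∈ E, e.1.1 ∈ S ∧ e.1.2 ∈ S) :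
    #E + #(S.image (· 1)) + #(S.image (· 0)) ≤ 2 * #S := by
  have hsplit : #E = #(E.filter (·.dir = 0)) + #(E.filter (·.dir = 1)) := by
    rw [card_eq_sum_card_fiberwise (t := univ) fun e _ => mem_univ e.dir, Fin.sum_univ_two]
  have h₀ := card_filter_dir_add_card_image_le hE (i := 0) (k := 1) (by decide)
  have h₁ := card_filter_dir_add_card_image_le hE (i := 1) (k := 0) (by decide)
  omega

theorem card_le_card_image_mul_card_image {q : ℕ} (S : Finset (Fin 2 → Fin q)) :
    #S ≤ #(S.image (· 0)) * #(S.image (· 1)) := by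
  rw [← card_product]
  refine card_le_card_of_injOn (fun v => (v 0, v 1))
    (fun v hv => mem_product.mpr ⟨mem_image_of_mem _ hv, mem_image_of_mem _ hv⟩) ?_
  intro v _ w _ h
  exact funext (Fin.forall_fin_two.mpr ⟨congrArg Prod.fst h, congrArg Prod.snd h⟩)

theorem card_edges_le_two_mul_sub_sqrt {q : ℕ} {S : Finset (Fin 2 → Fin q)}
    {E : Finset (OEdge q 2)} (hE : ∀ e ∈ E, e.1.1 ∈ S ∧ e.1.2 ∈ S) :
    (#E : ℝ) ≤ 2 * (#S - √(#S : ℝ)) := by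
  have hcount : (#E : ℝ) + #(S.image (· 1)) + #(S.image (· 0)) ≤ 2 * #S := by
    exact_mod_cast card_edges_add_card_image_add_card_image_le hE
  have hgrid : (#S : ℝ) ≤ #(S.image (· 0)) * #(S.image (· 1)) := by
    exact_mod_cast card_le_card_image_mul_card_image S
  have hamgm : 2 * √(#S : ℝ) ≤ #(S.image (· 1)) + #(S.image (· 0)) := by
    nlinarith [Real.sq_sqrt (Nat.cast_nonneg #S : (0 : ℝ) ≤ #S), Real.sqrt_nonneg (#S : ℝ),
      sq_nonneg ((#(S.image (· 1)) : ℝ) - #(S.image (· 0))),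
      (Nat.cast_nonneg _ : (0 : ℝ) ≤ #(S.image (· 1))),
      (Nat.cast_nonneg _ : (0 : ℝ) ≤ #(S.image (· 0)))]
  linarith

def gridGraph (q d : ℕ) (Λ : Finset (OEdge q d)) : SimpleGraph (Fin d → Fin q) :=
  SimpleGraph.fromRel fun u w => ∃ e ∈ Λ, e.1.1 = u ∧ e.1.2 = w

open Matrix in
theorem grad_mulVec_apply {q d : ℕ} (x : (Fin d → Fin q) → ℝ) (e : OEdge q d) :
    (grad q d *ᵥ x) e = x e.1.2 - x e.1.1 := by
  have hrow : grad q d e = Pi.single e.1.2 1 - Pi.single e.1.1 1 := by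
    ext v
    by_cases h₂ : v = e.1.2
    · subst h₂; simp [grad, e.fst_ne_snd.symm]
    · by_cases h₁ : v = e.1.1
      · subst h₁; simp [grad, e.fst_ne_snd]
      · simp [grad, h₁, h₂]
  change grad q d e ⬝ᵥ x = _
  rw [hrow, sub_dotProduct, single_dotProduct, single_dotProduct, one_mul, one_mul]

theorem mem_Wgrad_iff {q d : ℕ} {Λ : Finset (OEdge q d)} {x : (Fin d → Fin q) → ℝ} :
    x ∈ Wgrad q d Λ ↔ ∀ e ∈ Λ, x e.1.1 = x e.1.2 := by
  simp only [Wgrad, Submodule.mem_iInf, LinearMap.mem_ker, LinearMap.comp_apply,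
    LinearMap.proj_apply, Matrix.mulVecLin_apply, grad_mulVec_apply]
  exact forall₂_congr fun e _ => sub_eq_zero.trans eq_comm

theorem finrank_Wgrad {q d : ℕ} (Λ : Finset (OEdge q d)) :
    Module.finrank ℝ (Wgrad q d Λ) = Nat.card (gridGraph q d Λ).ConnectedComponent := by
  classical
  have hker :
      Wgrad q d Λ = LinearMap.ker (SimpleGraph.lapMatrix ℝ (gridGraph q d Λ)).toLin' := by
    ext x
    rw [mem_Wgrad_iff, LinearMap.mem_ker, Matrix.toLin'_apply,
      SimpleGraph.lapMatrix_mulVec_eq_zero_iff_forall_adj]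
    simp only [gridGraph, SimpleGraph.fromRel_adj]
    constructor
    · rintro h u w ⟨-, ⟨e, he, rfl, rfl⟩ | ⟨e, he, rfl, rfl⟩⟩
      exacts [h e he, (h e he).symm]
    · exact fun h e he => h _ _ ⟨e.fst_ne_snd, Or.inl ⟨e, he, rfl, rfl⟩⟩
  rw [Nat.card_eq_fintype_card, SimpleGraph.card_connectedComponent_eq_finrank_ker_toLin'_lapMatrix,
    hker]

theorem natCard_connectedComponent_gridGraph_le {q : ℕ} (Λ : Finset (OEdge q 2)) {ℓ : ℝ}
    (hℓ : ℓ ≤ #Λ) :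
    (Nat.card (gridGraph q 2 Λ).ConnectedComponent : ℝ) ≤
      q ^ 2 - 1 / 2 * (ℓ + √(2 * ℓ + 1) - 1) := by
  classical
  set G := gridGraph q 2 Λ
  let S : G.ConnectedComponent → Finset (Fin 2 → Fin q) :=
    fun c => univ.filter (G.connectedComponentMk · = c)
  let E : G.ConnectedComponent → Finset (OEdge q 2) :=
    fun c => Λ.filter (G.connectedComponentMk ·.1.1 = c)
  have hE : ∀ c, ∀ e ∈ E c, e.1.1 ∈ S c ∧ e.1.2 ∈ S c := by
    intro c e he
    obtain ⟨heΛ, rfl⟩ := mem_filter.mp he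
    have hadj : G.Adj e.1.1 e.1.2 :=
      SimpleGraph.fromRel_adj _ _ _ |>.mpr ⟨e.fst_ne_snd, Or.inl ⟨e, heΛ, rfl, rfl⟩⟩
    simp only [S, mem_filter, mem_univ, true_and]
    exact SimpleGraph.ConnectedComponent.eq.mpr hadj.reachable.symm
  have hS : ∀ c ∈ univ, 1 ≤ (#(S c) : ℝ) := fun c _ => by
    exact_mod_cast card_pos.mpr ⟨c.out, mem_filter.mpr ⟨mem_univ _, Quot.out_eq c⟩⟩
  have hsum_S : ∑ c, (#(S c) : ℝ) = q ^ 2 := by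
    have hfib := card_eq_sum_card_fiberwise (s := univ) (t := univ)
      (f := G.connectedComponentMk) fun v _ => mem_univ _
    rw [card_univ, Fintype.card_fun, Fintype.card_fin, Fintype.card_fin] at hfib
    exact_mod_cast hfib.symm
  have hsum_E : ∑ c, (#(E c) : ℝ) = #Λ := by
    exact_mod_cast (card_eq_sum_card_fiberwise (t := univ) fun e _ => mem_univ _).symm
  have hcount : ℓ ≤ ∑ c, 2 * ((#(S c) : ℝ) - √(#(S c) : ℝ)) :=
    (hℓ.trans_eq hsum_E.symm).trans (sum_le_sum fun c _ => card_edges_le_two_mul_sub_sqrt (hE c))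
  rw [Nat.card_eq_fintype_card, ← card_univ, ← hsum_S]
  exact card_le_sum_sub_of_le_sum_sub_sqrt univ _ hS hcount

theorem stmt_11_general (q : ℕ) (ℓ : ℕ)
    (m : ℕ)
    (hm : (m : ℝ) ≥ (q : ℝ) ^ 2 - (1 / 2) * ((ℓ : ℝ) + Real.sqrt (2 * (ℓ : ℝ) + 1) - 1)) :
    kappaGrad q 2 ℓ ≤ m := by
  refine Finset.sup_le fun Λ hΛ => ?_
  have hℓ : (ℓ : ℝ) ≤ #Λ := by exact_mod_cast (mem_filter.mp hΛ).2
  rw [finrank_Wgrad]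
  exact_mod_cast (natCard_connectedComponent_gridGraph_le Λ hℓ).trans hm

/-- 2D, known cosupport: if `m ≥ n − (1/2)(ℓ + √(2ℓ + 1) − 1)` with `n = q²`, then
`κ_∇(ℓ) ≤ m`, i.e. `m` measurements meet the known-cosupport uniqueness criterion. -/
theorem stmt_11 (q : ℕ) (hq : 3 ≤ q) (ℓ : ℕ) (hl : 4 < ℓ) (hlp : ℓ ≤ 2 * q * (q - 1))
    (m : ℕ)
    (hm : (m : ℝ) ≥ (q : ℝ) ^ 2 - (1 / 2) * ((ℓ : ℝ) + Real.sqrt (2 * (ℓ : ℝ) + 1) - 1)) :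
    kappaGrad q 2 ℓ ≤ m :=
  stmt_11_general q ℓ m hm
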